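/- arXiv:2312.02607 — 2 statements merged into one kernel-verified Lean document; each statement's English description precedes it below -/
import Mathlib

section
/- Let F be a finite field with q elements, let m, n be positive integers, let 1 ≤ t ≤ n, and let ẽ ∈ F^n have Hamming weight t. Then Σ_{H ∈ F^{m×n}} |{e ∈ F^n : wt(e) = t and H·e = H·ẽ}| = q^{mn} + (C(n,t)·(q−1)^t − 1)·q^{m(n−1)}. Equivalently, the expected number of weight-t solutions of H·e = H·ẽ over uniform H ∈ F^{m×n} is 1 + (C(n,t)·(q−1)^t − 1)/q^m. -/
/-!
Count the pairs `(H, e)` with `wt e = t` and `H (e - ẽ) = 0` by `e` instead of by `H`.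
For `e = ẽ` all `q^(mn)` matrices qualify. For `e ≠ ẽ` the map `H ↦ H (e - ẽ)` is additive and
onto `F^m`, so its fibres all have `q^(mn) / q^m = q^(m(n-1))` elements. Finally, there are
`C(n,t) (q-1)^t` vectors of weight `t`, one of which is `ẽ`.
-/

open Finset Matrix

theorem AddMonoidHom.card_filter_eq_zero_mul_card_of_surjective {G M : Type*} [AddGroup G]
    [Fintype G] [AddGroup M] [Fintype M] [DecidableEq M] (f : G →+ M)
    (hf : Function.Surjective f) :
    #{g | f g = 0} * Fintype.card M = Fintype.card G := calc
  #{g | f g = 0} * Fintype.card M = ∑ y : M, #{g | f g = y} := by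
    rw [sum_congr rfl fun y _ => AddMonoidHom.card_fiber_eq_of_mem_range f (hf y) (hf 0),
      sum_const, card_univ, smul_eq_mul, mul_comm]
  _ = Fintype.card G := (card_eq_sum_card_fiberwise fun _ _ => mem_coe.2 (mem_univ _)).symm

theorem Matrix.mulVec_left_surjective {R κ ι : Type*} [DivisionRing R] [Fintype ι]
    [DecidableEq ι] {v : ι → R} (hv : v ≠ 0) :
    Function.Surjective fun H : Matrix κ ι R => H *ᵥ v := by
  obtain ⟨j, hj⟩ := Function.ne_iff.mp hv
  refine fun y => ⟨vecMulVec y (Pi.single j (v j)⁻¹), ?_⟩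
  dsimp only
  rw [vecMulVec_mulVec, single_dotProduct, inv_mul_cancel₀ hj, MulOpposite.op_one, one_smul]

theorem Matrix.card_eq_pow {R κ ι : Type*} [Fintype R] [Fintype κ] [DecidableEq κ] [Fintype ι]
    [DecidableEq ι] :
    Fintype.card (Matrix κ ι R) = Fintype.card R ^ (Fintype.card κ * Fintype.card ι) := by
  rw [← Fintype.card_congr (of : (κ → ι → R) ≃ _), Fintype.card_fun, Fintype.card_fun,
    ← pow_mul, Nat.mul_comm]

theorem Matrix.card_filter_mulVec_eq_zero {R κ ι : Type*} [DivisionRing R] [Fintype R]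
    [DecidableEq R] [Fintype κ] [DecidableEq κ] [Fintype ι] [DecidableEq ι] {v : ι → R}
    (hv : v ≠ 0) :
    #{H : Matrix κ ι R | H *ᵥ v = 0} =
      Fintype.card R ^ (Fintype.card κ * (Fintype.card ι - 1)) := by
  have h := (mulVec.addMonoidHomLeft (m := κ) v).card_filter_eq_zero_mul_card_of_surjective
    (mulVec_left_surjective hv)
  obtain ⟨j, -⟩ := Function.ne_iff.mp hv
  have hι : Fintype.card ι = Fintype.card ι - 1 + 1 :=
    (Nat.succ_pred_eq_of_pos (Fintype.card_pos_iff.2 ⟨j⟩)).symm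
  rw [Fintype.card_fun, card_eq_pow, hι, mul_add_one, pow_add] at h
  exact Nat.eq_of_mul_eq_mul_right (pow_pos Fintype.card_pos _) h

theorem Matrix.card_filter_mulVec_eq_mulVec {R κ ι : Type*} [DivisionRing R] [Fintype R]
    [DecidableEq R] [Fintype κ] [DecidableEq κ] [Fintype ι] [DecidableEq ι] {u v : ι → R}
    (huv : u ≠ v) :
    #{H : Matrix κ ι R | H *ᵥ u = H *ᵥ v} =
      Fintype.card R ^ (Fintype.card κ * (Fintype.card ι - 1)) := by
  rw [← card_filter_mulVec_eq_zero (sub_ne_zero.2 huv)]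
  exact congrArg card (filter_congr fun H _ => by rw [mulVec_sub, sub_eq_zero])

theorem card_filter_support_eq {R ι : Type*} [Zero R] [Fintype R] [DecidableEq R] [Fintype ι]
    [DecidableEq ι] (s : Finset ι) :
    #{e : ι → R | ({i | e i ≠ 0} : Finset ι) = s} = (Fintype.card R - 1) ^ #s := by
  have hpi : ({e : ι → R | ({i | e i ≠ 0} : Finset ι) = s} : Finset _) =
      Fintype.piFinset fun i => if i ∈ s then {0}ᶜ else {0} := by
    ext e
    simp only [mem_filter, mem_univ, true_and, Fintype.mem_piFinset, Finset.ext_iff]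
    refine forall_congr' fun i => ?_
    split_ifs with hi <;> simp [hi]
  rw [hpi, Fintype.card_piFinset]
  simp only [apply_ite card, card_compl, card_singleton, prod_ite_mem, univ_inter, prod_const]

theorem card_filter_hammingNorm_eq {R ι : Type*} [Zero R] [Fintype R] [DecidableEq R] [Fintype ι]
    [DecidableEq ι] (t : ℕ) :
    #{e : ι → R | hammingNorm e = t} =
      (Fintype.card ι).choose t * (Fintype.card R - 1) ^ t := by
  rw [card_eq_sum_card_fiberwise (f := fun e : ι → R => ({i | e i ≠ 0} : Finset ι))
    (s := {e : ι → R | hammingNorm e = t}) (t := powersetCard t univ)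
    fun e he => mem_powersetCard_univ.2 (mem_filter.1 he).2]
  have hfiber : ∀ s ∈ powersetCard t (univ : Finset ι),
      #{e ∈ {e : ι → R | hammingNorm e = t} | ({i | e i ≠ 0} : Finset ι) = s} =
        (Fintype.card R - 1) ^ t := by
    intro s hs
    rw [← (mem_powersetCard_univ.1 hs), ← card_filter_support_eq s, filter_filter]
    congr 1
    exact filter_congr fun e _ => and_iff_right_of_imp fun h => by rw [hammingNorm, h]
  rw [sum_congr rfl hfiber, sum_const, card_powersetCard, card_univ, smul_eq_mul]

theorem sum_number_of_decoding_solutions_general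
    (F : Type) [Field F] [Fintype F] [DecidableEq F]
    (q : ℕ) (hq : Fintype.card F = q)
    (m n t : ℕ)
    (et : Fin n → F)
    (het : (Finset.univ.filter (fun i => et i ≠ 0)).card = t) :
    ∑ H : Matrix (Fin m) (Fin n) F,
        (Finset.univ.filter
          (fun e : Fin n → F =>
            (Finset.univ.filter (fun i => e i ≠ 0)).card = t ∧
              H.mulVec e = H.mulVec et)).card
      = q ^ (m * n) + (Nat.choose n t * (q - 1) ^ t - 1) * q ^ (m * (n - 1)) := by
  set S : Finset (Fin n → F) := {e | hammingNorm e = t}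
  have hetS : et ∈ S := mem_filter.2 ⟨mem_univ _, het⟩
  calc ∑ H : Matrix (Fin m) (Fin n) F, #{e | hammingNorm e = t ∧ H *ᵥ e = H *ᵥ et}
      = ∑ e ∈ S, #{H : Matrix (Fin m) (Fin n) F | H *ᵥ e = H *ᵥ et} := by
        refine Eq.trans ?_ (sum_card_bipartiteAbove_eq_sum_card_bipartiteBelow (s := univ)
          (t := S) (r := fun H e => H *ᵥ e = H *ᵥ et))
        simp only [bipartiteAbove, S, filter_filter]
    _ = #{H : Matrix (Fin m) (Fin n) F | H *ᵥ et = H *ᵥ et} +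
          ∑ e ∈ S.erase et, #{H : Matrix (Fin m) (Fin n) F | H *ᵥ e = H *ᵥ et} :=
        (add_sum_erase S _ hetS).symm
    _ = q ^ (m * n) + (#S - 1) * q ^ (m * (n - 1)) := by
        rw [filter_true_of_mem fun _ _ => rfl, card_univ, card_eq_pow,
          sum_congr rfl fun e he => card_filter_mulVec_eq_mulVec (ne_of_mem_erase he),
          sum_const, card_erase_of_mem hetS, smul_eq_mul]
        simp only [Fintype.card_fin, hq]
    _ = _ := by rw [card_filter_hammingNorm_eq, Fintype.card_fin, hq]

/-- For a fixed vector `ẽ` of Hamming weight `t`, summing over all matrices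
`H ∈ F^{m×n}` the number of weight-`t` vectors `e` with `H·e = H·ẽ` gives
`q^(mn) + (C(n,t)·(q-1)^t − 1)·q^(m(n-1))`: the expected number of solutions
of the syndrome decoding problem `SD(H, H·ẽ, t)` is
`1 + (C(n,t)·(q-1)^t − 1)/q^m`. -/
theorem sum_number_of_decoding_solutions
    (F : Type) [Field F] [Fintype F] [DecidableEq F]
    (q : ℕ) (hq : Fintype.card F = q)
    (m n t : ℕ) (hm : 0 < m) (hn : 0 < n) (ht1 : 1 ≤ t) (htn : t ≤ n)
    (et : Fin n → F)
    (het : (Finset.univ.filter (fun i => et i ≠ 0)).card = t) :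
    ∑ H : Matrix (Fin m) (Fin n) F,
        (Finset.univ.filter
          (fun e : Fin n → F =>
            (Finset.univ.filter (fun i => e i ≠ 0)).card = t ∧
              H.mulVec e = H.mulVec et)).card
      = q ^ (m * n) + (Nat.choose n t * (q - 1) ^ t - 1) * q ^ (m * (n - 1)) :=
  sum_number_of_decoding_solutions_general F q hq m n t et het
end

section
/- Let F be a finite field with q elements, let m, n be positive integers with 1 ≤ t ≤ n, and let ẽ ∈ F^n have Hamming weight t. Then Σ_{H ∈ F^{m×n}} |{x ∈ F^n : x − ẽ ∈ ker(H) and wt(x) = t}| = q^{mn}·(1 − q^{−m}) + Σ_{H ∈ F^{m×n}} |{x ∈ ker(H) : wt(x) = t}|, where ker(H) = {c ∈ F^n : H·c = 0}. Equivalently, E_H[|C'_1(t)|] = 1 − 1/q^m + E_H[|C(t)|] for H uniform in F^{m×n}, where C(t) (resp. C'_1(t)) is the set of weight-t vectors of ker(H) (resp. of the coset ker(H) + ẽ). -/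
/-!
For `v ≠ 0` the map `H ↦ H *ᵥ v` is a surjective additive map onto `F^m`, so exactly
`q^(m(n-1))` matrices annihilate `v`, while all `q^(mn)` matrices annihilate `0`. Counting the
pairs `(H, x)` with `x` of weight `t` both ways, the coset sum and the kernel sum agree term by
term except at `x = ẽ`: there `x - ẽ = 0` contributes `q^(mn)`, whereas `ẽ ≠ 0` contributes
`q^(m(n-1))`.
-/

open Finset Matrix

theorem card_matrix {F ι κ : Type*} [Fintype F] [Fintype ι] [Fintype κ] [DecidableEq ι]
    [DecidableEq κ] :
    Fintype.card (Matrix κ ι F) = Fintype.card F ^ (Fintype.card κ * Fintype.card ι) := by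
  rw [← Nat.card_eq_fintype_card, Matrix, Nat.card_fun, Nat.card_fun, ← pow_mul, mul_comm]
  simp

section
variable {F ι κ : Type*} [Field F] [Fintype ι]

theorem surjective_mulVec_left_of_ne_zero {v : ι → F} (hv : v ≠ 0) :
    Function.Surjective fun H : Matrix κ ι F => H *ᵥ v := by
  classical
  obtain ⟨j, hj⟩ := Function.ne_iff.mp hv
  intro w
  refine ⟨vecMulVec w (Pi.single j (v j)⁻¹), ?_⟩
  simp [vecMulVec_mulVec, single_dotProduct, inv_mul_cancel₀ hj]

variable [Fintype F] [DecidableEq F] [Fintype κ] [DecidableEq ι] [DecidableEq κ]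

theorem card_filter_mulVec_eq_zero_of_ne_zero {v : ι → F} (hv : v ≠ 0) :
    #{H : Matrix κ ι F | H *ᵥ v = 0}
      = Fintype.card F ^ (Fintype.card κ * (Fintype.card ι - 1)) := by
  set φ := mulVec.addMonoidHomLeft (m := κ) v
  have hker : #{H : Matrix κ ι F | H *ᵥ v = 0} * Fintype.card F ^ Fintype.card κ
      = Fintype.card F ^ (Fintype.card κ * Fintype.card ι) := by
    have hcard : Nat.card φ.ker = #{H : Matrix κ ι F | H *ᵥ v = 0} := by
      rw [← Fintype.card_subtype, ← Nat.card_eq_fintype_card]; rfl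
    have := φ.ker.card_mul_index
    rw [AddSubgroup.index_ker, AddMonoidHom.range_eq_top.mpr (surjective_mulVec_left_of_ne_zero hv),
      AddSubgroup.card_top] at this
    rwa [hcard, Nat.card_eq_fintype_card (α := Matrix κ ι F), card_matrix, Nat.card_fun,
      Nat.card_eq_fintype_card, Nat.card_eq_fintype_card] at this
  obtain ⟨j, -⟩ := Function.ne_iff.mp hv
  have hι : 1 ≤ Fintype.card ι := Fintype.card_pos_iff.mpr ⟨j⟩
  rw [← Nat.sub_add_cancel hι, mul_add_one, pow_add] at hker
  exact Nat.eq_of_mul_eq_mul_right (by positivity) hker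

theorem sum_card_filter_mulVec_sub_eq_zero {S : Finset (ι → F)} {e : ι → F} (he : e ∈ S)
    (h0 : 0 ∉ S) :
    ∑ H : Matrix κ ι F, #{x ∈ S | H *ᵥ (x - e) = 0}
      = (Fintype.card F ^ (Fintype.card κ * Fintype.card ι)
          - Fintype.card F ^ (Fintype.card κ * (Fintype.card ι - 1)))
        + ∑ H : Matrix κ ι F, #{x ∈ S | H *ᵥ x = 0} := by
  set c : (ι → F) → ℕ := fun v => #{H : Matrix κ ι F | H *ᵥ v = 0}
  have hc : ∀ v ≠ 0, c v = Fintype.card F ^ (Fintype.card κ * (Fintype.card ι - 1)) :=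
    fun _ hv => card_filter_mulVec_eq_zero_of_ne_zero hv
  have hc0 : c 0 = Fintype.card F ^ (Fintype.card κ * Fintype.card ι) := by
    simp only [c, mulVec_zero, filter_true, card_univ, card_matrix]
  have hle : c e ≤ c 0 := card_le_card (monotone_filter_right _ fun H _ => by simp)
  calc ∑ H : Matrix κ ι F, #{x ∈ S | H *ᵥ (x - e) = 0}
      = ∑ x ∈ S, c (x - e) := sum_card_bipartiteAbove_eq_sum_card_bipartiteBelow _
    _ = c 0 + ∑ x ∈ S.erase e, c x := by
      rw [← add_sum_erase _ _ he, sub_self]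
      refine congrArg _ (sum_congr rfl fun x hx => ?_)
      rw [hc _ (sub_ne_zero.mpr (ne_of_mem_erase hx)),
        hc _ (ne_of_mem_of_not_mem (mem_of_mem_erase hx) h0)]
    _ = (c 0 - c e) + ∑ x ∈ S, c x := by rw [← add_sum_erase _ _ he]; omega
    _ = _ := by
      rw [hc0, hc e (ne_of_mem_of_not_mem he h0)]
      exact congrArg _ (sum_card_bipartiteAbove_eq_sum_card_bipartiteBelow _).symm

end

theorem sum_coset_weight_count_vs_kernel_general
    (F : Type) [Field F] [Fintype F] [DecidableEq F]
    (q : ℕ) (hq : Fintype.card F = q)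
    (m n t : ℕ) (ht1 : 1 ≤ t)
    (et : Fin n → F)
    (het : (Finset.univ.filter (fun i => et i ≠ 0)).card = t) :
    ∑ H : Matrix (Fin m) (Fin n) F,
        (Finset.univ.filter
          (fun x : Fin n → F => H.mulVec (x - et) = 0 ∧
            (Finset.univ.filter (fun i => x i ≠ 0)).card = t)).card
      = (q ^ (m * n) - q ^ (m * (n - 1)))
        + ∑ H : Matrix (Fin m) (Fin n) F,
            (Finset.univ.filter
              (fun x : Fin n → F => H.mulVec x = 0 ∧
                (Finset.univ.filter (fun i => x i ≠ 0)).card = t)).card := by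
  subst hq
  have het_mem : et ∈ ({x | hammingNorm x = t} : Finset (Fin n → F)) := by
    simpa [hammingNorm] using het
  have h0 : (0 : Fin n → F) ∉ ({x | hammingNorm x = t} : Finset (Fin n → F)) := by
    simp only [mem_filter, mem_univ, true_and, hammingNorm_zero]
    omega
  simpa [hammingNorm, filter_filter, and_comm] using
    sum_card_filter_mulVec_sub_eq_zero (κ := Fin m) het_mem h0

/-- For a fixed vector `ẽ` of Hamming weight `t`, the sum over all matrices
`H ∈ F^{m×n}` of the number of weight-`t` vectors in the coset `ker(H) + ẽ`
equals `q^(mn) − q^(m(n-1))` plus the corresponding sum for the kernel itself: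
`E_H[|C'_1(t)|] = 1 − 1/q^m + E_H[|C(t)|]`. -/
theorem sum_coset_weight_count_vs_kernel
    (F : Type) [Field F] [Fintype F] [DecidableEq F]
    (q : ℕ) (hq : Fintype.card F = q)
    (m n t : ℕ) (hm : 0 < m) (hn : 0 < n) (ht1 : 1 ≤ t) (htn : t ≤ n)
    (et : Fin n → F)
    (het : (Finset.univ.filter (fun i => et i ≠ 0)).card = t) :
    ∑ H : Matrix (Fin m) (Fin n) F,
        (Finset.univ.filter
          (fun x : Fin n → F => H.mulVec (x - et) = 0 ∧
            (Finset.univ.filter (fun i => x i ≠ 0)).card = t)).card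
      = (q ^ (m * n) - q ^ (m * (n - 1)))
        + ∑ H : Matrix (Fin m) (Fin n) F,
            (Finset.univ.filter
              (fun x : Fin n → F => H.mulVec x = 0 ∧
                (Finset.univ.filter (fun i => x i ≠ 0)).card = t)).card :=
  sum_coset_weight_count_vs_kernel_general F q hq m n t ht1 et het
end
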